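/- The entanglement of purification is bounded above by the entanglement entropies of both marginals: for any density matrix ρ on ℂ^{n₁} ⊗ ℂ^{n₂} with reduced density matrices ρ₁ = Tr₂ ρ and ρ₂ = Tr₁ ρ, one has E_P(ρ) ≤ min(S(ρ₁), S(ρ₂)). -/

import Mathlib

open scoped Kronecker ComplexOrder

/-- A density matrix: positive semidefinite with trace 1. -/
def IsDensityMatrix {d : Type*} [Fintype d] (ρ : Matrix d d ℂ) : Prop :=
  ρ.PosSemidef ∧ ρ.trace = 1

/-- The rank-one outer product `|ψ⟩⟨ψ|` of a vector. -/
noncomputable def outerProd {d : Type*} (ψ : d → ℂ) : Matrix d d ℂ :=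
  Matrix.vecMulVec ψ (star ψ)

/-- Partial trace over the second tensor factor. -/
noncomputable def ptrace₂ {α β : Type*} [Fintype β] (σ : Matrix (α × β) (α × β) ℂ) :
    Matrix α α ℂ :=
  Matrix.of fun i i' => ∑ j, σ (i, j) (i', j)

/-- Partial trace over the first tensor factor. -/
noncomputable def ptrace₁ {α β : Type*} [Fintype α] (σ : Matrix (α × β) (α × β) ℂ) :
    Matrix β β ℂ :=
  Matrix.of fun j j' => ∑ i, σ (i, j) (i, j')

/-- Von Neumann entropy `S(ρ) = -∑ λᵢ log λᵢ` over the eigenvalues of `ρ`. -/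
noncomputable def vnEntropy {d : Type*} [Fintype d] [DecidableEq d] (ρ : Matrix d d ℂ) : ℝ :=
  if h : ρ.IsHermitian then ∑ i, Real.negMulLog (h.eigenvalues i) else 0

/-- Partial trace over the two ancilla factors `ℂ^{m₁} ⊗ ℂ^{m₂}` of a matrix on
`(ℂ^{n₁} ⊗ ℂ^{m₁}) ⊗ (ℂ^{n₂} ⊗ ℂ^{m₂})`, giving a matrix on `ℂ^{n₁} ⊗ ℂ^{n₂}`. -/
noncomputable def ptraceAnc {n₁ m₁ n₂ m₂ : ℕ}
    (σ : Matrix ((Fin n₁ × Fin m₁) × (Fin n₂ × Fin m₂))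
      ((Fin n₁ × Fin m₁) × (Fin n₂ × Fin m₂)) ℂ) :
    Matrix (Fin n₁ × Fin n₂) (Fin n₁ × Fin n₂) ℂ :=
  Matrix.of fun p q => ∑ j₁ : Fin m₁, ∑ j₂ : Fin m₂,
    σ ((p.1, j₁), (p.2, j₂)) ((q.1, j₁), (q.2, j₂))

/-- The entanglement of purification `E_P(ρ)`: the infimum of
`S(Tr_{A₂A'₂} |ψ⟩⟨ψ|)` over all purifications `ψ` of `ρ` in
`(ℂ^{n₁} ⊗ ℂ^{m₁}) ⊗ (ℂ^{n₂} ⊗ ℂ^{m₂})`. -/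
noncomputable def entPurification {n₁ n₂ : ℕ}
    (ρ : Matrix (Fin n₁ × Fin n₂) (Fin n₁ × Fin n₂) ℂ) : ℝ :=
  sInf {x : ℝ | ∃ (m₁ m₂ : ℕ), 1 ≤ m₁ ∧ 1 ≤ m₂ ∧
    ∃ ψ : (Fin n₁ × Fin m₁) × (Fin n₂ × Fin m₂) → ℂ,
      (∑ z, ‖ψ z‖ ^ 2 = 1) ∧ ptraceAnc (outerProd ψ) = ρ ∧
      x = vnEntropy (ptrace₂ (outerProd ψ))}


/-!
Take a purification `φ` of `ρ` that carries the whole ancilla. Handing the ancilla to the second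
party (with `A'₁` trivial) makes the reduced state on `A₁A'₁` a copy of `ρ₁`, so `E_P(ρ) ≤ S(ρ₁)`.
Handing it to the first party instead makes the reduced state on `A₂A'₂` a copy of `ρ₂`; the two
marginals `M Mᴴ` and `(Mᴴ M)ᵀ` of a pure state share their nonzero spectrum, so also
`E_P(ρ) ≤ S(ρ₂)`.
-/

open Matrix Polynomial

section Entropy

variable {a b : Type*} [Fintype a] [DecidableEq a] [Fintype b] [DecidableEq b]

lemma vnEntropy_eq_sum_roots_charpoly {A : Matrix a a ℂ} (hA : A.IsHermitian) :
    vnEntropy A = (A.charpoly.roots.map fun z => Real.negMulLog z.re).sum := by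
  rw [vnEntropy, dif_pos hA, hA.roots_charpoly_eq_eigenvalues, Multiset.map_map,
    Finset.sum_eq_multiset_sum]
  rfl

/-- Zero eigenvalues do not contribute to the entropy. -/
lemma vnEntropy_eq_of_X_pow_mul_charpoly_eq {A : Matrix a a ℂ} {B : Matrix b b ℂ}
    (hA : A.IsHermitian) (hB : B.IsHermitian)
    (h : (X : ℂ[X]) ^ Fintype.card b * A.charpoly = X ^ Fintype.card a * B.charpoly) :
    vnEntropy A = vnEntropy B := by
  have hroots := congrArg (fun p : ℂ[X] => (p.roots.map fun z => Real.negMulLog z.re).sum) h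
  simp only [roots_mul (mul_ne_zero (pow_ne_zero _ X_ne_zero) (charpoly_monic _).ne_zero),
    roots_pow, roots_X, Multiset.map_add, Multiset.sum_add, Multiset.map_nsmul,
    Multiset.map_singleton, Complex.zero_re, Real.negMulLog_zero, Multiset.sum_nsmul,
    Multiset.sum_singleton, smul_zero, zero_add] at hroots
  rw [vnEntropy_eq_sum_roots_charpoly hA, vnEntropy_eq_sum_roots_charpoly hB, hroots]

lemma vnEntropy_reindex (e : a ≃ b) (A : Matrix a a ℂ) :
    vnEntropy (reindex e e A) = vnEntropy A := by
  by_cases hA : A.IsHermitian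
  · refine vnEntropy_eq_of_X_pow_mul_charpoly_eq (hA.submatrix _) hA ?_
    rw [charpoly_reindex, Fintype.card_congr e]
  · have hA' : ¬ (reindex e e A).IsHermitian := fun h => hA (by simpa using h.submatrix e)
    rw [vnEntropy, vnEntropy, dif_neg hA, dif_neg hA']

lemma vnEntropy_transpose (A : Matrix a a ℂ) : vnEntropy Aᵀ = vnEntropy A := by
  by_cases hA : A.IsHermitian
  · exact vnEntropy_eq_of_X_pow_mul_charpoly_eq hA.transpose hA (by rw [charpoly_transpose])
  · have hA' : ¬ Aᵀ.IsHermitian := fun h => hA (by simpa using h.transpose)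
    rw [vnEntropy, vnEntropy, dif_neg hA, dif_neg hA']

lemma vnEntropy_mul_conjTranspose (M : Matrix a b ℂ) :
    vnEntropy (M * Mᴴ) = vnEntropy (Mᴴ * M) :=
  vnEntropy_eq_of_X_pow_mul_charpoly_eq (isHermitian_mul_conjTranspose_self M)
    (isHermitian_conjTranspose_mul_self M) (charpoly_mul_comm' M Mᴴ)

lemma vnEntropy_nonneg {A : Matrix a a ℂ} (hA : A.PosSemidef) (htr : A.trace = 1) :
    0 ≤ vnEntropy A := by
  have hsum : ∑ i, hA.1.eigenvalues i = 1 := by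
    simpa using congrArg Complex.re (hA.1.trace_eq_sum_eigenvalues.symm.trans htr)
  rw [vnEntropy, dif_pos hA.1]
  refine Finset.sum_nonneg fun i _ => Real.negMulLog_nonneg (hA.eigenvalues_nonneg i) ?_
  exact hsum ▸ Finset.single_le_sum (fun j _ => hA.eigenvalues_nonneg j) (Finset.mem_univ i)

end Entropy

section PureState

variable {α β : Type*}

lemma ptrace₂_outerProd [Fintype β] (ψ : α × β → ℂ) :
    ptrace₂ (outerProd ψ) = of (Function.curry ψ) * (of (Function.curry ψ))ᴴ := by
  ext i i'
  simp [ptrace₂, outerProd, mul_apply, vecMulVec_apply]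

lemma ptrace₁_outerProd [Fintype α] (ψ : α × β → ℂ) :
    ptrace₁ (outerProd ψ) = ((of (Function.curry ψ))ᴴ * of (Function.curry ψ))ᵀ := by
  ext j j'
  simp [ptrace₁, outerProd, mul_apply, vecMulVec_apply, mul_comm]

lemma trace_ptrace₂_outerProd [Fintype α] [Fintype β] (ψ : α × β → ℂ) :
    (ptrace₂ (outerProd ψ)).trace = ((∑ z, ‖ψ z‖ ^ 2 : ℝ) : ℂ) := by
  simp [trace, ptrace₂, outerProd, vecMulVec_apply, RCLike.mul_conj, Fintype.sum_prod_type]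

theorem vnEntropy_ptrace₂_outerProd_eq_ptrace₁ [Fintype α] [DecidableEq α] [Fintype β]
    [DecidableEq β] (ψ : α × β → ℂ) :
    vnEntropy (ptrace₂ (outerProd ψ)) = vnEntropy (ptrace₁ (outerProd ψ)) := by
  rw [ptrace₂_outerProd, ptrace₁_outerProd, vnEntropy_transpose, vnEntropy_mul_conjTranspose]

lemma vnEntropy_ptrace₂_outerProd_nonneg [Fintype α] [DecidableEq α] [Fintype β] {ψ : α × β → ℂ}
    (hψ : ∑ z, ‖ψ z‖ ^ 2 = 1) : 0 ≤ vnEntropy (ptrace₂ (outerProd ψ)) := by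
  refine vnEntropy_nonneg ?_ (by rw [trace_ptrace₂_outerProd, hψ, Complex.ofReal_one])
  rw [ptrace₂_outerProd]
  exact posSemidef_self_mul_conjTranspose _

theorem Matrix.PosSemidef.exists_ptrace₂_outerProd_eq {ι : Type*} [Fintype ι]
    {ρ : Matrix ι ι ℂ} (hρ : ρ.PosSemidef) :
    ∃ φ : ι × Fin (Fintype.card ι) → ℂ, ptrace₂ (outerProd φ) = ρ := by
  classical
  obtain ⟨B, rfl⟩ : ∃ B : Matrix ι ι ℂ, ρ = star B * B := by
    open scoped MatrixOrder in exact CStarAlgebra.nonneg_iff_eq_star_mul_self.mp hρ.nonneg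
  refine ⟨fun z => star (B ((Fintype.equivFin ι).symm z.2) z.1), ?_⟩
  ext x x'
  simp only [ptrace₂, outerProd, of_apply, vecMulVec_apply, Pi.star_apply, star_star, mul_apply,
    star_apply]
  exact (Fintype.equivFin ι).symm.sum_comp fun u => star (B u x) * B u x'

end PureState

section Purification

variable {n₁ n₂ m : ℕ}

lemma trace_ptraceAnc_outerProd {m₁ m₂ : ℕ} (ψ : (Fin n₁ × Fin m₁) × (Fin n₂ × Fin m₂) → ℂ) :
    (ptraceAnc (outerProd ψ)).trace = ((∑ z, ‖ψ z‖ ^ 2 : ℝ) : ℂ) := by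
  rw [← (Equiv.prodProdProdComm _ _ _ _).sum_comp]
  simp [trace, ptraceAnc, outerProd, vecMulVec_apply, RCLike.mul_conj, Fintype.sum_prod_type]

lemma entPurification_le_of_ptraceAnc_eq {ρ : Matrix (Fin n₁ × Fin n₂) (Fin n₁ × Fin n₂) ℂ}
    {m₁ m₂ : ℕ} (hm₁ : 1 ≤ m₁) (hm₂ : 1 ≤ m₂) (htr : ρ.trace = 1)
    {ψ : (Fin n₁ × Fin m₁) × (Fin n₂ × Fin m₂) → ℂ} (hψ : ptraceAnc (outerProd ψ) = ρ) :
    entPurification ρ ≤ vnEntropy (ptrace₂ (outerProd ψ)) := by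
  have hnorm : ∑ z, ‖ψ z‖ ^ 2 = 1 := by
    have htrace := trace_ptraceAnc_outerProd ψ
    rw [hψ, htr] at htrace
    exact_mod_cast htrace.symm
  refine csInf_le ⟨0, ?_⟩ ⟨m₁, m₂, hm₁, hm₂, ψ, hnorm, hψ, rfl⟩
  rintro _ ⟨_, _, -, -, ψ', hψ', -, rfl⟩
  exact vnEntropy_ptrace₂_outerProd_nonneg hψ'

def ancillaOnSecond (φ : (Fin n₁ × Fin n₂) × Fin m → ℂ) :
    (Fin n₁ × Fin 1) × (Fin n₂ × Fin m) → ℂ :=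
  fun z => φ ((z.1.1, z.2.1), z.2.2)

def ancillaOnFirst (φ : (Fin n₁ × Fin n₂) × Fin m → ℂ) :
    (Fin n₁ × Fin m) × (Fin n₂ × Fin 1) → ℂ :=
  fun z => φ ((z.1.1, z.2.1), z.1.2)

variable (φ : (Fin n₁ × Fin n₂) × Fin m → ℂ)

lemma ptraceAnc_outerProd_ancillaOnSecond :
    ptraceAnc (outerProd (ancillaOnSecond φ)) = ptrace₂ (outerProd φ) := by
  ext p q
  simp [ptraceAnc, ptrace₂, outerProd, vecMulVec_apply, ancillaOnSecond]

lemma ptraceAnc_outerProd_ancillaOnFirst :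
    ptraceAnc (outerProd (ancillaOnFirst φ)) = ptrace₂ (outerProd φ) := by
  ext p q
  simp [ptraceAnc, ptrace₂, outerProd, vecMulVec_apply, ancillaOnFirst]

lemma ptrace₂_outerProd_ancillaOnSecond :
    ptrace₂ (outerProd (ancillaOnSecond φ)) =
      reindex (Equiv.prodUnique _ _).symm (Equiv.prodUnique _ _).symm
        (ptrace₂ (ptrace₂ (outerProd φ))) := by
  ext x x'
  simp [ptrace₂, outerProd, vecMulVec_apply, ancillaOnSecond, Fintype.sum_prod_type]

lemma ptrace₁_outerProd_ancillaOnFirst :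
    ptrace₁ (outerProd (ancillaOnFirst φ)) =
      reindex (Equiv.prodUnique _ _).symm (Equiv.prodUnique _ _).symm
        (ptrace₁ (ptrace₂ (outerProd φ))) := by
  ext y y'
  simp [ptrace₁, ptrace₂, outerProd, vecMulVec_apply, ancillaOnFirst, Fintype.sum_prod_type]

end Purification

/-- The entanglement of purification is bounded above by the entanglement
entropies of both marginals. -/
theorem entPurification_le_min_marginal_entropies {n₁ n₂ : ℕ}
    (ρ : Matrix (Fin n₁ × Fin n₂) (Fin n₁ × Fin n₂) ℂ) (hρ : IsDensityMatrix ρ) :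
    entPurification ρ ≤ min (vnEntropy (ptrace₂ ρ)) (vnEntropy (ptrace₁ ρ)) := by
  obtain ⟨hpsd, htr⟩ := hρ
  obtain ⟨φ, hφ⟩ := hpsd.exists_ptrace₂_outerProd_eq
  have hm : 1 ≤ Fintype.card (Fin n₁ × Fin n₂) := by
    refine Fintype.card_pos_iff.mpr (not_isEmpty_iff.mp fun h => ?_)
    simp [trace] at htr
  refine le_min ?_ ?_
  · calc entPurification ρ ≤ vnEntropy (ptrace₂ (outerProd (ancillaOnSecond φ))) :=
          entPurification_le_of_ptraceAnc_eq le_rfl hm htr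
            ((ptraceAnc_outerProd_ancillaOnSecond φ).trans hφ)
      _ = vnEntropy (ptrace₂ ρ) := by
          rw [ptrace₂_outerProd_ancillaOnSecond, vnEntropy_reindex, hφ]
  · calc entPurification ρ ≤ vnEntropy (ptrace₂ (outerProd (ancillaOnFirst φ))) :=
          entPurification_le_of_ptraceAnc_eq hm le_rfl htr
            ((ptraceAnc_outerProd_ancillaOnFirst φ).trans hφ)
      _ = vnEntropy (ptrace₁ (outerProd (ancillaOnFirst φ))) :=
          vnEntropy_ptrace₂_outerProd_eq_ptrace₁ _
      _ = vnEntropy (ptrace₁ ρ) := by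
          rw [ptrace₁_outerProd_ancillaOnFirst, vnEntropy_reindex, hφ]
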